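/- For every integer t ≥ 1, with m = binom(4t,2) and n = 4t, the limited augmented Zarankiewicz number satisfies z_L(m,n) ≥ 2·binom(4t,2) + 4t² − 2t. -/

import Mathlib

open Finset

/-- A bipartite graph on `α × β` (a set of cells, called 1-edges) is `C₄`-free if no two
distinct rows share two distinct columns. -/
def C4Free {α β : Type*} (E1 : Finset (α × β)) : Prop :=
  ∀ i k : α, ∀ j l : β, i ≠ k → j ≠ l →
    (i, j) ∈ E1 → (i, l) ∈ E1 → (k, j) ∈ E1 → (k, l) ∈ E1 → False

/-- A 2-edge `(i,j;k,l)`: a pair of cells, its two halves `(i,j)` and `(k,l)`. -/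
abbrev TwoEdge (α β : Type*) := (α × β) × (α × β)

/-- A 2-edge `(i,j;k,l)` is nondegenerate if `i ≠ k` and `j ≠ l`. -/
def Nondeg {α β : Type*} (e : TwoEdge α β) : Prop :=
  e.1.1 ≠ e.2.1 ∧ e.1.2 ≠ e.2.2

/-- The simplicity condition: the halves of the 2-edges in `E2` are pairwise distinct
cells, none of which lies in `E1`. -/
def Simple {α β : Type*} (E1 : Finset (α × β)) (E2 : Finset (TwoEdge α β)) : Prop :=
  (∀ e ∈ E2, e.1 ≠ e.2) ∧
  (∀ e ∈ E2, e.1 ∉ E1 ∧ e.2 ∉ E1) ∧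
  (∀ e ∈ E2, ∀ f ∈ E2, e ≠ f →
    e.1 ≠ f.1 ∧ e.1 ≠ f.2 ∧ e.2 ≠ f.1 ∧ e.2 ≠ f.2)

/-- A cell is occupied if it lies in `E1` or is a half of some 2-edge in `E2`. -/
def Occupied {α β : Type*} (E1 : Finset (α × β)) (E2 : Finset (TwoEdge α β))
    (c : α × β) : Prop :=
  c ∈ E1 ∨ ∃ e ∈ E2, e.1 = c ∨ e.2 = c

/-- `(E1, E2)` contains a generalized `C₄`-cycle:
(1) a classical `C₄` among 1-edges; or
(2) a nondegenerate 2-edge `(i,j;k,l) ∈ E2` with both opposite cells `(i,l)`, `(k,j)` occupied; or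
(3) a 2-edge `(i,j;p,q) ∈ E2` and a cell `(k,l)` with `k ∉ {i,p}`, `l ∉ {j,q}` such that the
five cells `(k,l), (k,j), (k,q), (i,l), (p,l)` are all occupied, these five cells being
pairwise distinct in case the 2-edge is nondegenerate. -/
def HasGenC4 {α β : Type*} (E1 : Finset (α × β)) (E2 : Finset (TwoEdge α β)) : Prop :=
  (∃ i k : α, ∃ j l : β, i ≠ k ∧ j ≠ l ∧
      (i, j) ∈ E1 ∧ (i, l) ∈ E1 ∧ (k, j) ∈ E1 ∧ (k, l) ∈ E1) ∨
  (∃ e ∈ E2, Nondeg e ∧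
      Occupied E1 E2 (e.1.1, e.2.2) ∧ Occupied E1 E2 (e.2.1, e.1.2)) ∨
  (∃ e ∈ E2, ∃ k : α, ∃ l : β,
      k ≠ e.1.1 ∧ k ≠ e.2.1 ∧ l ≠ e.1.2 ∧ l ≠ e.2.2 ∧
      Occupied E1 E2 (k, l) ∧ Occupied E1 E2 (k, e.1.2) ∧ Occupied E1 E2 (k, e.2.2) ∧
      Occupied E1 E2 (e.1.1, l) ∧ Occupied E1 E2 (e.2.1, l) ∧
      (Nondeg e →
        [(k, l), (k, e.1.2), (k, e.2.2), (e.1.1, l), (e.2.1, l)].Pairwise (· ≠ ·)))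

/-- The Zarankiewicz number `z(m,n)`: the maximum number of cells of a `C₄`-free bipartite
graph on `[m] × [n]`. -/
noncomputable def zar (m n : ℕ) : ℕ :=
  sSup {k | ∃ E1 : Finset (Fin m × Fin n), C4Free E1 ∧ E1.card = k}

/-- An admissible limited augmented bipartite graph on `[m] × [n]`: `E1` is `C₄`-free with
`|E1| = z(m,n)`, the simplicity condition holds, and there is no generalized `C₄`-cycle. -/
def Admissible {m n : ℕ} (E1 : Finset (Fin m × Fin n))
    (E2 : Finset (TwoEdge (Fin m) (Fin n))) : Prop :=
  C4Free E1 ∧ E1.card = zar m n ∧ Simple E1 E2 ∧ ¬ HasGenC4 E1 E2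

/-- The limited augmented Zarankiewicz number `z_L(m,n)`: the maximum of `|E1| + |E2|`
over all admissible limited augmented bipartite graphs on `[m] × [n]`. -/
noncomputable def zL (m n : ℕ) : ℕ :=
  sSup {k | ∃ (E1 : Finset (Fin m × Fin n)) (E2 : Finset (TwoEdge (Fin m) (Fin n))),
    Admissible E1 E2 ∧ E1.card + E2.card = k}

/-!
Take as rows all 2-subsets of the `n = 2h` columns and as `E1` their incidence graph. It is
`C₄`-free with `2·binom(n,2)` cells, which is optimal: distinct rows of a `C₄`-free graph share
no pair of columns, so `∑ binom(dᵣ, 2) ≤ binom(n, 2)` and hence `|E1| ≤ m + binom(n, 2)`.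

The fixed-point-free involution `x ↦ n - 1 - x` of the columns permutes the rows. A row it moves
is disjoint from its image, and the fixed rows `{x, n - 1 - x}` are pairwise disjoint, so at most
`h` rows are fixed and the others form at least `h(h-1)` pairs `{r, r'}`. For each pair add the
degenerate 2-edge `(r, c; r', c)` with `c` a column outside both rows (possible once `n ≥ 6`).
Every row then holds at most one half, so a generalized `C₄` of type (3) on such a 2-edge would
need a column common to `r` and `r'`.
-/

open Function

theorem Nat.le_one_add_choose_two (d : ℕ) : d ≤ 1 + d.choose 2 := by
  cases d with
  | zero => simp
  | succ k => rw [Nat.choose_succ_succ, Nat.choose_one_right]; omega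

section Zarankiewicz

variable {α β : Type*} [Fintype α] [Fintype β] [DecidableEq α] [DecidableEq β]

def rowSet (E : Finset (α × β)) (r : α) : Finset β := {x | (r, x) ∈ E}

theorem card_eq_sum_card_rowSet (E : Finset (α × β)) : #E = ∑ r, #(rowSet E r) := by
  simp only [rowSet, card_filter]
  rw [← Fintype.sum_prod_type', ← card_filter, filter_mem_eq_inter, univ_inter]

theorem card_le_card_add_choose_two_of_c4Free {E : Finset (α × β)} (hE : C4Free E) :
    #E ≤ Fintype.card α + (Fintype.card β).choose 2 := by
  have hdisj : (Set.univ : Set α).PairwiseDisjoint fun r => powersetCard 2 (rowSet E r) := by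
    intro r _ k _ hrk
    refine disjoint_left.mpr fun s hsr hsk => ?_
    rw [mem_powersetCard] at hsr hsk
    obtain ⟨x, y, hxy, rfl⟩ := card_eq_two.mp hsr.2
    simp only [insert_subset_iff, singleton_subset_iff, rowSet, mem_filter, mem_univ,
      true_and] at hsr hsk
    exact hE r k x y hrk hxy hsr.1.1 hsr.1.2 hsk.1.1 hsk.1.2
  have hpairs : ∑ r, (#(rowSet E r)).choose 2 ≤ (Fintype.card β).choose 2 := by
    simp only [← card_powersetCard, ← card_univ]
    rw [← card_biUnion (by simpa using hdisj)]
    exact card_le_card fun s hs => by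
      obtain ⟨r, -, hs⟩ := mem_biUnion.mp hs
      exact powersetCard_mono (subset_univ _) hs
  calc #E = ∑ r, #(rowSet E r) := card_eq_sum_card_rowSet E
    _ ≤ ∑ r : α, (1 + (#(rowSet E r)).choose 2) := by
      gcongr with r
      exact Nat.le_one_add_choose_two _
    _ ≤ Fintype.card α + (Fintype.card β).choose 2 := by
      rw [sum_add_distrib, sum_const, card_univ, smul_eq_mul, mul_one]; omega

end Zarankiewicz

section Incidence

variable {α β : Type*} [Fintype α] [Fintype β] [DecidableEq β]

def incidence (S : α → Finset β) : Finset (α × β) := {q | q.2 ∈ S q.1}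

@[simp]
theorem mem_incidence {S : α → Finset β} {q : α × β} : q ∈ incidence S ↔ q.2 ∈ S q.1 := by
  simp [incidence]

theorem card_incidence [DecidableEq α] (S : α → Finset β) : #(incidence S) = ∑ r, #(S r) := by
  rw [card_eq_sum_card_rowSet]
  congr! with r
  ext x
  simp [rowSet]

theorem c4Free_incidence {S : α → Finset β} (hS : Injective S) (hS2 : ∀ r, #(S r) ≤ 2) :
    C4Free (incidence S) := by
  intro i k j l hik hjl hij hil hkj hkl
  simp only [mem_incidence] at hij hil hkj hkl
  have hpair : ∀ r, j ∈ S r → l ∈ S r → {j, l} = S r := fun r hj hl =>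
    eq_of_subset_of_card_le (by simp [insert_subset_iff, hj, hl])
      (by rw [card_pair hjl]; exact hS2 r)
  exact hik (hS ((hpair i hij hil).symm.trans (hpair k hkj hkl)))

end Incidence

noncomputable def finChooseTwoEquiv (n : ℕ) : Fin (n.choose 2) ≃ {s : Finset (Fin n) // #s = 2} :=
  (Fintype.equivFinOfCardEq (by rw [Fintype.card_finset_len, Fintype.card_fin])).symm

noncomputable def pairSet (n : ℕ) (r : Fin (n.choose 2)) : Finset (Fin n) := finChooseTwoEquiv n r

theorem card_pairSet (n : ℕ) (r : Fin (n.choose 2)) : #(pairSet n r) = 2 :=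
  (finChooseTwoEquiv n r).2

theorem pairSet_injective (n : ℕ) : Injective (pairSet n) :=
  Subtype.val_injective.comp (finChooseTwoEquiv n).injective

theorem c4Free_incidence_pairSet (n : ℕ) : C4Free (incidence (pairSet n)) :=
  c4Free_incidence (pairSet_injective n) fun r => (card_pairSet n r).le

theorem card_incidence_pairSet (n : ℕ) : #(incidence (pairSet n)) = 2 * n.choose 2 := by
  simp [card_incidence, card_pairSet, mul_comm]

theorem zar_choose_two (n : ℕ) : zar (n.choose 2) n = 2 * n.choose 2 := by
  have hbound : ∀ k ∈ {k | ∃ E1 : Finset (Fin (n.choose 2) × Fin n), C4Free E1 ∧ #E1 = k},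
      k ≤ 2 * n.choose 2 := by
    rintro k ⟨E1, hE1, rfl⟩
    simpa [two_mul] using card_le_card_add_choose_two_of_c4Free hE1
  have hmem : 2 * n.choose 2 ∈
      {k | ∃ E1 : Finset (Fin (n.choose 2) × Fin n), C4Free E1 ∧ #E1 = k} :=
    ⟨incidence (pairSet n), c4Free_incidence_pairSet n, card_incidence_pairSet n⟩
  exact le_antisymm (csSup_le ⟨_, hmem⟩ hbound) (le_csSup ⟨_, hbound⟩ hmem)

theorem le_zL_of_admissible {m n : ℕ} {E1 : Finset (Fin m × Fin n)}
    {E2 : Finset (TwoEdge (Fin m) (Fin n))} (h : Admissible E1 E2) : #E1 + #E2 ≤ zL m n := by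
  refine le_csSup ⟨Fintype.card (Fin m × Fin n) + Fintype.card (TwoEdge (Fin m) (Fin n)), ?_⟩
    ⟨E1, E2, h, rfl⟩
  rintro k ⟨E1', E2', -, rfl⟩
  exact add_le_add (card_le_univ E1') (card_le_univ E2')

section MatchingEdges

variable {α β : Type*} [DecidableEq α] [DecidableEq β] {E1 : Finset (α × β)} {G : Finset α}
  {p : α → α} {c : α → β}

def matchingEdges (G : Finset α) (p : α → α) (c : α → β) : Finset (TwoEdge α β) :=
  G.image fun r => ((r, c r), (p r, c r))

theorem card_matchingEdges : #(matchingEdges G p c) = #G :=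
  card_image_of_injective _ fun _ _ h => congrArg (fun e : TwoEdge α β => e.1.1) h

theorem simple_matchingEdges (hp : Involutive p) (hG : ∀ r ∈ G, p r ∉ G)
    (hc : ∀ r ∈ G, (r, c r) ∉ E1 ∧ (p r, c r) ∉ E1) : Simple E1 (matchingEdges G p c) := by
  have hne : ∀ r ∈ G, ∀ r' ∈ G, r ≠ p r' := fun r hr r' hr' h => hG r' hr' (h ▸ hr)
  refine ⟨?_, ?_, ?_⟩
  · simp only [matchingEdges, mem_image, forall_exists_index, and_imp, forall_apply_eq_imp_iff₂]
    intro r hr h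
    exact hne r hr r hr (Prod.ext_iff.mp h).1
  · simpa [matchingEdges] using hc
  · simp only [matchingEdges, mem_image, forall_exists_index, and_imp, forall_apply_eq_imp_iff₂]
    intro r hr r' hr' hrr'
    have hrr' : r ≠ r' := fun h => hrr' (h ▸ rfl)
    simp only [ne_eq, Prod.mk.injEq, not_and]
    exact ⟨fun h => absurd h hrr', fun h => absurd h (hne r hr r' hr'),
      fun h => absurd h.symm (hne r' hr' r hr), fun h => absurd (hp.injective h) hrr'⟩

theorem mem_or_eq_of_occupied_matchingEdges (hp : Involutive p) (hG : ∀ r ∈ G, p r ∉ G)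
    {r s : α} (hr : r ∈ G) (hs : s = r ∨ s = p r) {l : β}
    (h : Occupied E1 (matchingEdges G p c) (s, l)) : (s, l) ∈ E1 ∨ l = c r := by
  obtain h | ⟨e, he, hhalf⟩ := h
  · exact Or.inl h
  obtain ⟨g, hg, rfl⟩ := mem_image.mp he
  have hgr : g = r := by
    rcases hs with rfl | rfl <;> rcases hhalf with h | h <;> simp only [Prod.mk.injEq] at h
    · exact h.1
    · exact absurd (by rw [← h.1, hp g]; exact hg) (hG s hr)
    · exact absurd (h.1 ▸ hg) (hG r hr)
    · exact hp.injective h.1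
  subst hgr
  rcases hhalf with h | h <;> exact Or.inr (Prod.ext_iff.mp h).2.symm

theorem not_hasGenC4_matchingEdges (hE1 : C4Free E1) (hp : Involutive p)
    (hG : ∀ r ∈ G, p r ∉ G) (hdisj : ∀ r ∈ G, ∀ l, (r, l) ∈ E1 → (p r, l) ∉ E1) :
    ¬ HasGenC4 E1 (matchingEdges G p c) := by
  rintro (⟨i, k, j, l, hik, hjl, h1, h2, h3, h4⟩ | ⟨e, he, hnd, -⟩ |
    ⟨e, he, k, l, -, -, hl, -, -, -, -, hil, hpl, -⟩)
  · exact hE1 i k j l hik hjl h1 h2 h3 h4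
  · obtain ⟨r, -, rfl⟩ := mem_image.mp he
    exact hnd.2 rfl
  · obtain ⟨r, hr, rfl⟩ := mem_image.mp he
    have hrl := (mem_or_eq_of_occupied_matchingEdges hp hG hr (Or.inl rfl) hil).resolve_right hl
    have hprl :=
      (mem_or_eq_of_occupied_matchingEdges hp hG hr (Or.inr rfl) hpl).resolve_right hl
    exact hdisj r hr l hrl hprl

end MatchingEdges

section InducedInvolution

variable {β : Type*} [DecidableEq β] {σ : β → β}

theorem Finset.image_eq_or_disjoint_image_of_card_eq_two (hσ : Involutive σ)
    (hfree : ∀ x, σ x ≠ x) {s : Finset β} (hs : #s = 2) :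
    s.image σ = s ∨ Disjoint s (s.image σ) := by
  obtain ⟨a, b, hab, rfl⟩ := card_eq_two.mp hs
  by_cases hb : σ a = b
  · left
    rw [image_insert, image_singleton, hb, ← hb, hσ, pair_comm]
  · right
    have hab' : a ≠ σ b := fun h => hb (by rw [h, hσ])
    simp [hfree, hb, Ne.symm hab']

theorem Finset.eq_pair_of_image_eq_of_card_eq_two (hfree : ∀ x, σ x ≠ x) {s : Finset β}
    (hs : #s = 2) (hσs : s.image σ = s) {x : β} (hx : x ∈ s) : s = {x, σ x} := by
  have hσx : σ x ∈ s := hσs ▸ mem_image_of_mem σ hx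
  refine (eq_of_subset_of_card_le ?_ ?_).symm
  · simp [insert_subset_iff, hx, hσx]
  · rw [hs, card_pair (hfree x).symm]

theorem Function.Involutive.card_eq_two_mul_card_lt_add_card_fixed {α : Type*} [Fintype α]
    [LinearOrder α] {p : α → α} (hp : Involutive p) :
    Fintype.card α = 2 * #{r | r < p r} + #{r | p r = r} := by
  have hswap : #{r | p r < r} = #{r | r < p r} :=
    card_nbij' p p (fun r hr => by simpa [hp r] using hr) (fun r hr => by simpa [hp r] using hr)
      (fun r _ => hp r) (fun r _ => hp r)
  have hsplit : #{r | ¬ r < p r} = #{r | p r < r} + #{r | p r = r} := by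
    rw [← card_union_of_disjoint (disjoint_filter.mpr fun r _ h h' => h.ne h')]
    congr 1
    ext r
    simp [not_lt, le_iff_lt_or_eq]
  rw [← card_univ, ← card_filter_add_card_filter_not (s := univ) (fun r => r < p r), hsplit, hswap]
  ring

variable {α : Type*} {S : α → Finset β} {p : α → α}

theorem involutive_of_image_involutive (hσ : Involutive σ) (hS : Injective S)
    (hp : ∀ r, S (p r) = (S r).image σ) : Involutive p :=
  fun r => hS (by rw [hp, hp, image_image, hσ.comp_self, image_id])

theorem two_mul_card_fixed_le [Fintype α] [DecidableEq α] [Fintype β] (hfree : ∀ x, σ x ≠ x)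
    (hS : Injective S) (hS2 : ∀ r, #(S r) = 2) (hp : ∀ r, S (p r) = (S r).image σ) :
    2 * #{r | p r = r} ≤ Fintype.card β := by
  have hfix : ∀ r, p r = r → ∀ x ∈ S r, S r = {x, σ x} := fun r hr _ hx =>
    eq_pair_of_image_eq_of_card_eq_two hfree (hS2 r) (hr ▸ hp r).symm hx
  have hdisj : (({r | p r = r} : Finset α) : Set α).PairwiseDisjoint S := by
    intro r hr r' hr' hrr'
    refine disjoint_left.mpr fun x hx hx' => hrr' (hS ?_)
    simp only [coe_filter, mem_univ, true_and, Set.mem_ofPred_eq] at hr hr'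
    rw [hfix r hr x hx, hfix r' hr' x hx']
  calc 2 * #{r | p r = r} = #(({r | p r = r} : Finset α).biUnion S) := by
        rw [card_biUnion hdisj, sum_congr rfl fun r _ => hS2 r, sum_const, smul_eq_mul, mul_comm]
    _ ≤ Fintype.card β := card_le_univ _

end InducedInvolution

theorem exists_simple_not_hasGenC4_incidence {α β : Type*} [Fintype α] [LinearOrder α]
    [Fintype β] [DecidableEq β] {σ : β → β} {S : α → Finset β} {p : α → α}
    (hσ : Involutive σ) (hfree : ∀ x, σ x ≠ x) (hβ : 5 ≤ Fintype.card β)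
    (hS : Injective S) (hS2 : ∀ r, #(S r) = 2) (hp : ∀ r, S (p r) = (S r).image σ) :
    ∃ E2 : Finset (TwoEdge α β), Simple (incidence S) E2 ∧ ¬ HasGenC4 (incidence S) E2 ∧
      2 * Fintype.card α ≤ 4 * #E2 + Fintype.card β := by
  have hpi := involutive_of_image_involutive hσ hS hp
  set G : Finset α := {r | r < p r} with hGdef
  have hG : ∀ r ∈ G, p r ∉ G := fun r hr hpr => by
    simp only [G, mem_filter, mem_univ, true_and, hpi r] at hr hpr
    exact lt_asymm hr hpr
  have hdisj : ∀ r ∈ G, Disjoint (S r) (S (p r)) := fun r hr => hp r ▸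
    (image_eq_or_disjoint_image_of_card_eq_two hσ hfree (hS2 r)).resolve_left fun h =>
      (mem_filter.mp hr).2.ne (hS ((hp r).trans h)).symm
  have hcol : ∀ r, ∃ x, x ∉ S r ∪ S (p r) := by
    intro r
    by_contra! h
    have hle := (card_le_card fun x (_ : x ∈ univ) => h x).trans (card_union_le (S r) (S (p r)))
    rw [card_univ, hS2, hS2] at hle
    omega
  choose c hc using hcol
  refine ⟨matchingEdges G p c, simple_matchingEdges hpi hG fun r _ => ?_,
    not_hasGenC4_matchingEdges (c4Free_incidence hS fun r => (hS2 r).le) hpi hG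
      fun r hr l hl hl' => disjoint_left.mp (hdisj r hr) (mem_incidence.mp hl)
        (mem_incidence.mp hl'), ?_⟩
  · simpa [not_or] using hc r
  · have := hpi.card_eq_two_mul_card_lt_add_card_fixed
    have := two_mul_card_fixed_le hfree hS hS2 hp
    rw [card_matchingEdges, hGdef]
    omega

theorem Fin.rev_ne_self_of_even {n : ℕ} (hn : Even n) (x : Fin n) : x.rev ≠ x := by
  obtain ⟨k, rfl⟩ := hn
  intro h
  have := congrArg Fin.val h
  rw [Fin.val_rev] at this
  omega

noncomputable def pairRev (n : ℕ) (r : Fin (n.choose 2)) : Fin (n.choose 2) :=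
  (finChooseTwoEquiv n).symm
    ⟨(pairSet n r).image Fin.rev, by rw [card_image_of_injective _ Fin.rev_injective, card_pairSet]⟩

theorem pairSet_pairRev (n : ℕ) (r : Fin (n.choose 2)) :
    pairSet n (pairRev n r) = (pairSet n r).image Fin.rev := by
  simp [pairSet, pairRev]

theorem le_zL_choose_two_of_three_le (h : ℕ) (hh : 3 ≤ h) :
    2 * (2 * h).choose 2 + h * (h - 1) ≤ zL ((2 * h).choose 2) (2 * h) := by
  obtain ⟨E2, hsimple, hgen, hcard⟩ := exists_simple_not_hasGenC4_incidence Fin.rev_involutive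
    (Fin.rev_ne_self_of_even (even_two_mul h)) (by simp only [Fintype.card_fin]; omega)
    (pairSet_injective _) (card_pairSet _) (pairSet_pairRev _)
  have hzL := le_zL_of_admissible ⟨c4Free_incidence_pairSet _,
    (card_incidence_pairSet _).trans (zar_choose_two _).symm, hsimple, hgen⟩
  have hC : 2 * (2 * h).choose 2 = 4 * (h * (h - 1)) + 2 * h := by
    rw [Nat.choose_two_right, Nat.mul_div_cancel' (Nat.even_mul_pred_self _).two_dvd]
    obtain ⟨k, rfl⟩ : ∃ k, h = k + 1 := ⟨h - 1, by omega⟩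
    rw [show 2 * (k + 1) - 1 = 2 * k + 1 by omega, Nat.add_sub_cancel]
    ring
  rw [card_incidence_pairSet] at hzL
  simp only [Fintype.card_fin] at hcard
  linarith

/- With four columns no column avoids both a row and its mirror image, so this case uses two
nondegenerate 2-edges instead, checked by computation. -/
set_option synthInstance.maxSize 2000 in
set_option maxRecDepth 100000 in
theorem le_zL_six_four : 14 ≤ zL 6 4 := by
  let E1 : Finset (Fin 6 × Fin 4) :=
    {(0, 0), (0, 1), (1, 0), (1, 2), (2, 0), (2, 3), (3, 1), (3, 2), (4, 1), (4, 3), (5, 2), (5, 3)}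
  let E2 : Finset (TwoEdge (Fin 6) (Fin 4)) := {((0, 2), (3, 3)), ((1, 3), (2, 1))}
  have hadm : Admissible E1 E2 :=
    ⟨by unfold C4Free; decide, (zar_choose_two 4).symm, by unfold Simple; decide,
      by unfold HasGenC4 Occupied Nondeg; decide⟩
  exact le_zL_of_admissible hadm

theorem le_zL_choose_two_of_two_le (h : ℕ) (hh : 2 ≤ h) :
    2 * (2 * h).choose 2 + h * (h - 1) ≤ zL ((2 * h).choose 2) (2 * h) := by
  obtain rfl | hh := hh.eq_or_lt
  · exact le_zL_six_four
  · exact le_zL_choose_two_of_three_le h hh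

/-- For every integer `t ≥ 1`, with `m = binom(4t,2)` and `n = 4t`,
`z_L(m,n) ≥ 2·binom(4t,2) + 4t² − 2t`. -/
theorem zL_K4t_quadratic (t : ℕ) (ht : 1 ≤ t) :
    2 * Nat.choose (4 * t) 2 + (4 * t ^ 2 - 2 * t) ≤ zL (Nat.choose (4 * t) 2) (4 * t) := by
  have hcount : 4 * t ^ 2 - 2 * t = 2 * t * (2 * t - 1) := by
    rw [Nat.mul_sub, sq]
    ring_nf
  simpa only [hcount, ← mul_assoc, show (2 : ℕ) * 2 = 4 from rfl] using
    le_zL_choose_two_of_two_le (2 * t) (by omega)
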